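/- Let J = { i : A_i < ∞ }. For every x ∈ ℝ^d_+, if R(x) < F(x) + Δ then Σ_{i∈J} x_i/A_i < 1. -/

import Mathlib

/-! If `∑_{i ∈ J} x_i / A_i ≥ 1`, rescale `x` to a point `x' = c • x` (`0 < c ≤ 1`) with
`∑_{i ∈ J} x'_i / A_i = 1`. The function `G = F - ⟨B, ·⟩` is convex on the orthant, equals
`F 0 - Δ` at the points `A_i e_i` (`i ∈ J`) by the choice of `B_i`, and is at most `F 0` on the
axes `i ∉ J`, where `B_i` dominates every subgradient of `F_i`. Jensen's inequality bounds `G` by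
`F 0 - Δ` on the `J`-part of `x'`; adding the remaining coordinates cannot increase `G`, because
a continuous convex function that is bounded above along a ray is nonincreasing in its direction.
Thus `‖x'‖` lies in the set defining `H(x)`, so `H(x) ≤ ‖x'‖ ≤ ‖x‖` and `R(x) = F(x) + Δ`. -/

open Set
open scoped Classical

noncomputable section

/-- The nonnegative orthant of `ℝ^d` (with the Euclidean structure). -/
def orthant (d : ℕ) : Set (EuclideanSpace ℝ (Fin d)) := {x | ∀ i, 0 ≤ x i}

/-- The subdifferential (set of subgradients) of a function `φ : ℝ₊ → ℝ` at a point `t`. -/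
def subdiff (φ : ℝ → ℝ) (t : ℝ) : Set ℝ :=
  {v | ∀ s : ℝ, 0 ≤ s → φ t + v * (s - t) ≤ φ s}

/-- `Fi F i t = F (t • e_i)`, the restriction of `F` to the `i`-th coordinate axis. -/
def Fi {d : ℕ} (F : EuclideanSpace ℝ (Fin d) → ℝ) (i : Fin d) (t : ℝ) : ℝ :=
  F (t • EuclideanSpace.single i (1 : ℝ))

/-- The set `{t > 0 : (F_i(t) + Δ - F(0))/t ∈ ∂F_i(t)}` defining `A_i`. -/
def setA {d : ℕ} (F : EuclideanSpace ℝ (Fin d) → ℝ) (Δ : ℝ) (i : Fin d) : Set ℝ :=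
  {t | 0 < t ∧ (Fi F i t + Δ - F 0) / t ∈ subdiff (Fi F i) t}

/-- `A_i` (finite value; `A_i = ∞` corresponds to `setA F Δ i` being empty). -/
def Avar {d : ℕ} (F : EuclideanSpace ℝ (Fin d) → ℝ) (Δ : ℝ) (i : Fin d) : ℝ :=
  sInf (setA F Δ i)

/-- `B_i = (F_i(A_i) + Δ - F(0))/A_i` if `A_i < ∞`, and
`B_i = sup ⋃_{t>0} ∂F_i(t)` otherwise. -/
def Bvar {d : ℕ} (F : EuclideanSpace ℝ (Fin d) → ℝ) (Δ : ℝ) (i : Fin d) : ℝ :=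
  if (setA F Δ i).Nonempty then (Fi F i (Avar F Δ i) + Δ - F 0) / Avar F Δ i
  else sSup (⋃ t ∈ Ioi (0 : ℝ), subdiff (Fi F i) t)

/-- The inner product `⟨B, x⟩`. -/
def Bdot {d : ℕ} (F : EuclideanSpace ℝ (Fin d) → ℝ) (Δ : ℝ)
    (x : EuclideanSpace ℝ (Fin d)) : ℝ :=
  ∑ i, Bvar F Δ i * x i

/-- The set `{t > 0 : F(0) + ⟨B, t·x/‖x‖⟩ ≥ Δ + F(t·x/‖x‖)}` defining `H(x)`. -/
def setH {d : ℕ} (F : EuclideanSpace ℝ (Fin d) → ℝ) (Δ : ℝ)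
    (x : EuclideanSpace ℝ (Fin d)) : Set ℝ :=
  {t | 0 < t ∧ Δ + F ((t / ‖x‖) • x) ≤ F 0 + Bdot F Δ ((t / ‖x‖) • x)}

/-- The game analogue `R` of the concave envelope: `R(0) = F(0)`; for `x ≠ 0`,
`R(x) = F(x) + Δ` if `‖x‖ ≥ H(x)` (i.e. `setH F Δ x` is nonempty with `sInf ≤ ‖x‖`),
and `R(x) = F(0) + ⟨B, x⟩` if `‖x‖ < H(x)`. -/
def Rfun {d : ℕ} (F : EuclideanSpace ℝ (Fin d) → ℝ) (Δ : ℝ)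
    (x : EuclideanSpace ℝ (Fin d)) : ℝ :=
  if x = 0 then F 0
  else if (setH F Δ x).Nonempty ∧ sInf (setH F Δ x) ≤ ‖x‖ then F x + Δ
  else F 0 + Bdot F Δ x

/-- Membership in the class `𝒢`: `f : ℝ^d₊ → ℝ₊` continuous, `F ≤ f ≤ F + Δ`, and `f`
is concave on every convex subset `D` of the orthant on which `f < F + Δ`. -/
def memG {d : ℕ} (F : EuclideanSpace ℝ (Fin d) → ℝ) (Δ : ℝ)
    (f : EuclideanSpace ℝ (Fin d) → ℝ) : Prop :=
  ContinuousOn f (orthant d) ∧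
  (∀ x ∈ orthant d, 0 ≤ f x) ∧
  (∀ x ∈ orthant d, F x ≤ f x ∧ f x ≤ F x + Δ) ∧
  (∀ D : Set (EuclideanSpace ℝ (Fin d)), D ⊆ orthant d → Convex ℝ D →
    (∀ x ∈ D, f x < F x + Δ) → ConcaveOn ℝ D f)

open Filter Topology in
theorem ConvexOn.map_add_le_of_le_on_ray {E : Type*} [NormedAddCommGroup E] [NormedSpace ℝ E]
    {s : Set E} {G : E → ℝ} {u v : E} {b : ℝ} (hG : ConvexOn ℝ s G) (hGc : ContinuousOn G s)
    (hu : u ∈ s) (huv : u + v ∈ s) (hray : ∀ t : ℝ, 1 ≤ t → t • v ∈ s)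
    (hb : ∀ t : ℝ, 1 ≤ t → G (t • v) ≤ b) :
    G (u + v) ≤ G u := by
  set γ : ℝ → E := fun ε => (1 - ε) • u + v
  have hγ : ∀ ε ∈ Ioo (0 : ℝ) 1, γ ε = (1 - ε) • u + ε • ε⁻¹ • v := fun ε hε => by
    rw [smul_inv_smul₀ hε.1.ne']
  have hγs : MapsTo γ (Ioo 0 1) s := fun ε hε => by
    rw [hγ ε hε]
    exact hG.1 hu (hray _ ((one_le_inv₀ hε.1).2 hε.2.le)) (by linarith [hε.2]) hε.1.le
      (by ring)
  have hlim : Tendsto (G ∘ γ) (𝓝[Ioo 0 1] 0) (𝓝 (G (u + v))) := by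
    have hγc : Continuous γ := by fun_prop
    have hGγ := (hGc (γ 0) (by simpa [γ] using huv)).comp hγc.continuousWithinAt hγs
    simpa [γ] using hGγ.tendsto
  have hbound : Tendsto (fun ε : ℝ => (1 - ε) * G u + ε * b) (𝓝[Ioo 0 1] 0) (𝓝 (G u)) := by
    have : Continuous (fun ε : ℝ => (1 - ε) * G u + ε * b) := by fun_prop
    simpa using this.continuousWithinAt (s := Ioo 0 1) (x := 0) |>.tendsto
  rw [nhdsWithin_Ioo_eq_nhdsGT one_pos] at hlim hbound
  refine le_of_tendsto_of_tendsto hlim hbound ?_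
  filter_upwards [Ioo_mem_nhdsGT one_pos] with ε hε
  have hinv : 1 ≤ ε⁻¹ := (one_le_inv₀ hε.1).2 hε.2.le
  calc G (γ ε) = G ((1 - ε) • u + ε • ε⁻¹ • v) := by rw [hγ ε hε]
    _ ≤ (1 - ε) • G u + ε • G (ε⁻¹ • v) :=
      hG.2 hu (hray _ hinv) (by linarith [hε.2]) hε.1.le (by ring)
    _ ≤ (1 - ε) * G u + ε * b := by
      simp only [smul_eq_mul]
      gcongr
      exacts [hε.1.le, hb _ hinv]

theorem ConvexOn.rightDeriv_mem_subdiff {φ : ℝ → ℝ} (hφ : ConvexOn ℝ (Ici 0) φ) {t : ℝ}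
    (ht : 0 < t) : derivWithin φ (Ioi t) t ∈ subdiff φ t := by
  have hint : t ∈ interior (Ici (0 : ℝ)) := by rwa [interior_Ici]
  intro s hs
  rcases lt_trichotomy s t with hst | rfl | hst
  · have h := (hφ.slope_le_leftDeriv_of_mem_interior hs hint hst).trans
      (hφ.leftDeriv_le_rightDeriv_of_mem_interior hint)
    rw [slope_def_field, div_le_iff₀ (sub_pos.2 hst)] at h
    nlinarith
  · simp
  · have h := hφ.rightDeriv_le_slope_of_mem_interior hint hs hst
    rw [slope_def_field, le_div_iff₀ (sub_pos.2 hst)] at h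
    linarith

theorem LipschitzOnWith.le_of_mem_subdiff {φ : ℝ → ℝ} {L : NNReal}
    (hφ : LipschitzOnWith L φ (Ici 0)) {t v : ℝ} (ht : 0 ≤ t) (hv : v ∈ subdiff φ t) : v ≤ L := by
  have h1 := hv (t + 1) (by linarith)
  have h2 := hφ.dist_le_mul (t + 1) (show (0 : ℝ) ≤ t + 1 by linarith) t ht
  rw [Real.dist_eq, Real.dist_eq, add_sub_cancel_left, abs_one, mul_one] at h2
  rw [add_sub_cancel_left, mul_one] at h1
  linarith [le_abs_self (φ (t + 1) - φ t)]

section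

variable {d : ℕ}

local notation "𝐞" i:max => EuclideanSpace.single i (1 : ℝ)

theorem convex_orthant : Convex ℝ (orthant d) := fun x hx y hy a b ha hb _ i => by
  have := hx i
  have := hy i
  simp only [PiLp.add_apply, PiLp.smul_apply, smul_eq_mul]
  positivity

theorem sum_smul_single_apply (s : Finset (Fin d)) (c : Fin d → ℝ) (j : Fin d) :
    (∑ i ∈ s, c i • 𝐞 i) j = if j ∈ s then c j else 0 := by
  simp [WithLp.ofLp_sum, Pi.single_apply]

theorem sum_smul_single_mem_orthant {s : Finset (Fin d)} {c : Fin d → ℝ}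
    (hc : ∀ i ∈ s, 0 ≤ c i) : ∑ i ∈ s, c i • 𝐞 i ∈ orthant d := fun j => by
  rw [sum_smul_single_apply]
  split_ifs with hj
  exacts [hc j hj, le_rfl]

theorem sum_smul_single_eq (x : EuclideanSpace ℝ (Fin d)) : ∑ i, x i • 𝐞 i = x := by
  ext j
  simp [sum_smul_single_apply]

theorem smul_single_mem_orthant (i : Fin d) {t : ℝ} (ht : 0 ≤ t) : t • 𝐞 i ∈ orthant d := by
  simpa using sum_smul_single_mem_orthant (s := {i}) (c := fun _ => t) (by simpa using ht)

variable {G : EuclideanSpace ℝ (Fin d) → ℝ} {c : ℝ} {s : Finset (Fin d)}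

theorem ConvexOn.map_sum_smul_single_le (hG : ConvexOn ℝ (orthant d) G) {w t : Fin d → ℝ}
    (hw₀ : ∀ i ∈ s, 0 ≤ w i) (hw₁ : ∑ i ∈ s, w i = 1) (ht : ∀ i ∈ s, 0 ≤ t i)
    (hc : ∀ i ∈ s, G (t i • 𝐞 i) ≤ c) : G (∑ i ∈ s, (w i * t i) • 𝐞 i) ≤ c :=
  calc G (∑ i ∈ s, (w i * t i) • 𝐞 i) = G (∑ i ∈ s, w i • t i • 𝐞 i) := by simp only [smul_smul]
    _ ≤ ∑ i ∈ s, w i • G (t i • 𝐞 i) :=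
      hG.map_sum_le hw₀ hw₁ fun i hi => smul_single_mem_orthant i (ht i hi)
    _ ≤ ∑ i ∈ s, w i • c :=
      Finset.sum_le_sum fun i hi => smul_le_smul_of_nonneg_left (hc i hi) (hw₀ i hi)
    _ = c := by rw [← Finset.sum_smul, hw₁, one_smul]

theorem ConvexOn.map_sum_smul_single_le_of_le_on_axes (hG : ConvexOn ℝ (orthant d) G)
    (h₀ : G 0 ≤ c) (hc : ∀ i ∈ s, ∀ t : ℝ, 0 ≤ t → G (t • 𝐞 i) ≤ c) {z : Fin d → ℝ}
    (hz : ∀ i ∈ s, 0 ≤ z i) : G (∑ i ∈ s, z i • 𝐞 i) ≤ c := by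
  rcases s.eq_empty_or_nonempty with rfl | hs
  · simpa using h₀
  have hn : (0 : ℝ) < s.card := by exact_mod_cast hs.card_pos
  have hz' : ∀ i ∈ s, 0 ≤ (s.card : ℝ) * z i := fun i hi => mul_nonneg hn.le (hz i hi)
  have := hG.map_sum_smul_single_le (w := fun _ => (s.card : ℝ)⁻¹)
    (t := fun i => (s.card : ℝ) * z i) (fun _ _ => by positivity) (by simp [hn.ne']) hz'
    fun i hi => hc i hi _ (hz' i hi)
  simpa [inv_mul_cancel_left₀ hn.ne'] using this

variable {F : EuclideanSpace ℝ (Fin d) → ℝ} {Δ : ℝ} {L : NNReal} {i : Fin d}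

theorem Fi_zero : Fi F i 0 = F 0 := by simp [Fi]

theorem convexOn_Fi (hF : ConvexOn ℝ (orthant d) F) (i : Fin d) :
    ConvexOn ℝ (Ici 0) (Fi F i) := by
  have hmaps : MapsTo (fun t : ℝ => t • 𝐞 i) (Ici 0) (orthant d) := fun t ht =>
    smul_single_mem_orthant i ht
  refine ⟨convex_Ici 0, fun s hs t ht a b ha hb hab => ?_⟩
  simpa only [Fi, add_smul, smul_smul, smul_eq_mul] using hF.2 (hmaps hs) (hmaps ht) ha hb hab

theorem lipschitzOnWith_Fi (hF : LipschitzOnWith L F (orthant d)) (i : Fin d) :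
    LipschitzOnWith L (Fi F i) (Ici 0) := by
  have hsmul : LipschitzWith 1 (fun t : ℝ => t • 𝐞 i) :=
    LipschitzWith.of_dist_le_mul fun s t => by simp [dist_eq_norm, ← sub_smul, norm_smul]
  have : LipschitzOnWith (L * 1) (Fi F i) (Ici 0) :=
    hF.comp hsmul.lipschitzOnWith fun t ht => smul_single_mem_orthant i ht
  rwa [mul_one] at this

theorem Fi_le_of_not_nonempty_setA (hconv : ConvexOn ℝ (Ici 0) (Fi F i))
    (hlip : LipschitzOnWith L (Fi F i) (Ici 0)) (hi : ¬ (setA F Δ i).Nonempty) {t : ℝ}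
    (ht : 0 ≤ t) : Fi F i t ≤ F 0 + Bvar F Δ i * t := by
  rcases ht.eq_or_lt with rfl | ht
  · simp [Fi_zero]
  set v := derivWithin (Fi F i) (Ioi t) t
  have hv : v ∈ subdiff (Fi F i) t := hconv.rightDeriv_mem_subdiff ht
  have hvB : v ≤ Bvar F Δ i := by
    rw [Bvar, if_neg hi]
    refine le_csSup ⟨L, ?_⟩ (mem_biUnion (show t ∈ Ioi 0 from ht) hv)
    simp only [upperBounds, mem_iUnion, mem_ofPred_eq]
    rintro w ⟨u, hu, hw⟩
    exact hlip.le_of_mem_subdiff (le_of_lt hu) hw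
  have h0 := hv 0 le_rfl
  rw [Fi_zero] at h0
  nlinarith

theorem Avar_pos (hΔ : 0 < Δ) (hlip : LipschitzOnWith L (Fi F i) (Ici 0))
    (hi : (setA F Δ i).Nonempty) : 0 < Avar F Δ i := by
  have hbound : ∀ t ∈ setA F Δ i, Δ ≤ 2 * L * t := by
    rintro t ⟨ht, hsub⟩
    have hslope := hlip.le_of_mem_subdiff ht.le hsub
    rw [div_le_iff₀ ht] at hslope
    have hlip0 := hlip.dist_le_mul 0 (mem_Ici.2 le_rfl) t ht.le
    rw [Real.dist_eq, Real.dist_eq, Fi_zero, zero_sub, abs_neg, abs_of_pos ht] at hlip0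
    linarith [le_abs_self (F 0 - Fi F i t)]
  obtain ⟨t, ht⟩ := hi
  have hL : (0 : ℝ) < L := by
    by_contra! hL
    nlinarith [hbound t ht, ht.1]
  calc 0 < Δ / (2 * L) := by positivity
    _ ≤ Avar F Δ i := le_csInf ⟨t, ht⟩ fun s hs => by
      rw [div_le_iff₀ (by positivity)]
      linarith [hbound s hs]

theorem Bvar_mul_Avar (hi : (setA F Δ i).Nonempty) (hA : Avar F Δ i ≠ 0) :
    Bvar F Δ i * Avar F Δ i = Fi F i (Avar F Δ i) + Δ - F 0 := by
  rw [Bvar, if_pos hi, div_mul_cancel₀ _ hA]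

theorem Bdot_eq_inner (x : EuclideanSpace ℝ (Fin d)) :
    Bdot F Δ x = inner ℝ (WithLp.toLp 2 (Bvar F Δ)) x := by
  simp [Bdot, PiLp.inner_apply, mul_comm]

theorem Bdot_smul_single (i : Fin d) (t : ℝ) : Bdot F Δ (t • 𝐞 i) = Bvar F Δ i * t := by
  simp [Bdot]

theorem convexOn_sub_Bdot (hF : ConvexOn ℝ (orthant d) F) :
    ConvexOn ℝ (orthant d) (fun x => F x - Bdot F Δ x) := by
  simp_rw [Bdot_eq_inner]
  exact hF.sub ((innerSL ℝ (WithLp.toLp 2 (Bvar F Δ))).toLinearMap.concaveOn convex_orthant)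

theorem continuousOn_sub_Bdot (hF : ContinuousOn F (orthant d)) :
    ContinuousOn (fun x => F x - Bdot F Δ x) (orthant d) := by
  simp_rw [Bdot_eq_inner]
  exact hF.sub (continuous_const.inner continuous_id).continuousOn

theorem add_le_Bdot_of_sum_div_Avar_eq_one (hΔ : 0 < Δ) (hFconv : ConvexOn ℝ (orthant d) F)
    (hFlip : LipschitzOnWith L F (orthant d)) {x : EuclideanSpace ℝ (Fin d)}
    (hx : x ∈ orthant d)
    (hsum : ∑ i ∈ Finset.univ.filter (fun i => (setA F Δ i).Nonempty), x i / Avar F Δ i = 1) :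
    Δ + F x ≤ F 0 + Bdot F Δ x := by
  set J := Finset.univ.filter (fun i => (setA F Δ i).Nonempty)
  set G := fun y => F y - Bdot F Δ y
  have hG : ConvexOn ℝ (orthant d) G := convexOn_sub_Bdot hFconv
  have hJ : ∀ i ∈ J, (setA F Δ i).Nonempty ∧ 0 < Avar F Δ i := fun i hi =>
    have hi := (Finset.mem_filter.1 hi).2
    ⟨hi, Avar_pos hΔ (lipschitzOnWith_Fi hFlip i) hi⟩
  set u := ∑ i ∈ J, x i • 𝐞 i
  set v := ∑ i ∈ Finset.univ.filter (fun i => ¬ (setA F Δ i).Nonempty), x i • 𝐞 i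
  have hxuv : u + v = x := by
    rw [Finset.sum_filter_add_sum_filter_not, sum_smul_single_eq]
  have hGu : G u ≤ F 0 - Δ := by
    have := hG.map_sum_smul_single_le (s := J) (w := fun i => x i / Avar F Δ i)
      (t := Avar F Δ) (c := F 0 - Δ) (fun i hi => div_nonneg (hx i) (hJ i hi).2.le) hsum
      (fun i hi => (hJ i hi).2.le) fun i hi => by
        have := Bvar_mul_Avar (hJ i hi).1 (hJ i hi).2.ne'
        simp only [G, Bdot_smul_single]
        change Fi F i _ - _ ≤ _
        linarith
    refine le_of_eq_of_le ?_ this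
    refine congrArg G (Finset.sum_congr rfl fun i hi => ?_)
    rw [div_mul_cancel₀ _ (hJ i hi).2.ne']
  have hGv : ∀ t : ℝ, 1 ≤ t → G (t • v) ≤ F 0 := fun t ht => by
    simp only [v, Finset.smul_sum, smul_smul]
    refine hG.map_sum_smul_single_le_of_le_on_axes (by simp [G, Bdot]) (fun i hi s hs => ?_)
      fun i _ => mul_nonneg (by linarith) (hx i)
    have := Fi_le_of_not_nonempty_setA (convexOn_Fi hFconv i) (lipschitzOnWith_Fi hFlip i)
      (Finset.mem_filter.1 hi).2 hs
    simp only [G, Bdot_smul_single]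
    change Fi F i _ - _ ≤ _
    linarith
  have hray : ∀ t : ℝ, 1 ≤ t → t • v ∈ orthant d := fun t ht => by
    simp only [v, Finset.smul_sum, smul_smul]
    exact sum_smul_single_mem_orthant fun i _ => mul_nonneg (by linarith) (hx i)
  have := hG.map_add_le_of_le_on_ray (continuousOn_sub_Bdot hFlip.continuousOn)
    (sum_smul_single_mem_orthant fun i _ => hx i) (hxuv ▸ hx) hray hGv
  rw [hxuv] at this
  simp only [G] at this
  linarith

theorem Rfun_eq_of_le_Bdot_smul {x : EuclideanSpace ℝ (Fin d)} (hx : x ≠ 0) {c : ℝ}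
    (hc₀ : 0 < c) (hc₁ : c ≤ 1) (h : Δ + F (c • x) ≤ F 0 + Bdot F Δ (c • x)) :
    Rfun F Δ x = F x + Δ := by
  have hnorm : 0 < ‖x‖ := norm_pos_iff.2 hx
  have hmem : c * ‖x‖ ∈ setH F Δ x := by
    refine ⟨by positivity, ?_⟩
    rwa [mul_div_cancel_right₀ _ hnorm.ne']
  have hinf : sInf (setH F Δ x) ≤ ‖x‖ :=
    (csInf_le ⟨0, fun _ ht => ht.1.le⟩ hmem).trans (mul_le_of_le_one_left hnorm.le hc₁)
  rw [Rfun, if_neg hx, if_pos ⟨⟨_, hmem⟩, hinf⟩]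

end

theorem sum_lt_one_of_R_lt_general {d : ℕ} (Δ : ℝ) (hΔ : 0 < Δ)
    (F : EuclideanSpace ℝ (Fin d) → ℝ)
    (hFconv : ConvexOn ℝ (orthant d) F)
    (L : NNReal) (hFlip : LipschitzOnWith L F (orthant d))
    (x : EuclideanSpace ℝ (Fin d)) (hx : x ∈ orthant d)
    (h : Rfun F Δ x < F x + Δ) :
    ∑ i ∈ Finset.univ.filter (fun i => (setA F Δ i).Nonempty), x i / Avar F Δ i < 1 := by
  by_contra! hS
  set S := ∑ i ∈ Finset.univ.filter (fun i => (setA F Δ i).Nonempty), x i / Avar F Δ i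
  have hS₀ : 0 < S := one_pos.trans_le hS
  have hx₀ : x ≠ 0 := by
    rintro rfl
    simp [S] at hS₀
  have hx' : S⁻¹ • x ∈ orthant d := fun i => by
    simpa using mul_nonneg (inv_nonneg.2 hS₀.le) (hx i)
  have hsum : ∑ i ∈ Finset.univ.filter (fun i => (setA F Δ i).Nonempty),
      (S⁻¹ • x) i / Avar F Δ i = 1 := by
    simp only [PiLp.smul_apply, smul_eq_mul, mul_div_assoc, ← Finset.mul_sum]
    exact inv_mul_cancel₀ hS₀.ne'
  have hR := Rfun_eq_of_le_Bdot_smul hx₀ (inv_pos.2 hS₀) (inv_le_one_of_one_le₀ hS)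
    (add_le_Bdot_of_sum_div_Avar_eq_one hΔ hFconv hFlip hx' hsum)
  exact h.ne hR

/-- Let `J = {i : A_i < ∞}`. If `R(x) < F(x) + Δ` for some `x` in the
nonnegative orthant, then `Σ_{i ∈ J} x_i / A_i < 1`. -/
theorem sum_lt_one_of_R_lt {d : ℕ} (hd : 0 < d) (Δ : ℝ) (hΔ : 0 < Δ)
    (F : EuclideanSpace ℝ (Fin d) → ℝ)
    (hF0 : ∀ x ∈ orthant d, 0 ≤ F x)
    (hFconv : ConvexOn ℝ (orthant d) F)
    (L : NNReal) (hFlip : LipschitzOnWith L F (orthant d))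
    (x : EuclideanSpace ℝ (Fin d)) (hx : x ∈ orthant d)
    (h : Rfun F Δ x < F x + Δ) :
    ∑ i ∈ Finset.univ.filter (fun i => (setA F Δ i).Nonempty), x i / Avar F Δ i < 1 :=
  sum_lt_one_of_R_lt_general Δ hΔ F hFconv L hFlip x hx h

end
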